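/- arXiv:1804.04122 — 4 statements merged into one kernel-verified Lean document; each statement's English description precedes it below -/
import Mathlib

section
/- Let E be a finite-dimensional real normed vector space with dim E ≥ 2, let g : E → ℝ be a nonzero continuous linear functional, let f, u ∈ E with g(f) < 0, and define the linear map Ξ : E → E by Ξ(z) = z + (g(z)/g(f)) • u. Then the operator norm of Ξ satisfies ‖Ξ‖ ≥ 1. -/
/-- Proposition 3: for a translation reset with equal norms on both domains,
the saltation matrix `Ξ z = z + (g z / g f) • u` has operator norm at least 1. -/
theorem saltation_translation_norm_ge_one
    {E : Type*} [NormedAddCommGroup E] [NormedSpace ℝ E] [FiniteDimensional ℝ E]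
    (hdim : 2 ≤ Module.finrank ℝ E)
    (g : E →L[ℝ] ℝ) (hg : g ≠ 0)
    (f u : E) (hgf : g f < 0)
    (Ξ : E →L[ℝ] E) (hΞ : ∀ z : E, Ξ z = z + (g z / g f) • u) :
    1 ≤ ‖Ξ‖ := by
  have hinj : ¬ Function.Injective g.toLinearMap := by
    intro h
    have := LinearMap.finrank_le_finrank_of_injective h
    simp [Module.finrank_self] at this
    omega
  rw [← LinearMap.ker_eq_bot] at hinj
  obtain ⟨z, hzmem, hz0⟩ := Submodule.exists_mem_ne_zero_of_ne_bot hinj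
  have hgz : g z = 0 := hzmem
  have hfix : Ξ z = z := by
    rw [hΞ z, hgz]
    simp
  have hle := Ξ.le_opNorm z
  rw [hfix] at hle
  have hz : 0 < ‖z‖ := norm_pos_iff.mpr hz0
  calc 1 = ‖z‖ / ‖z‖ := by rw [div_self hz.ne']
    _ ≤ ‖Ξ‖ := by rw [div_le_iff₀ hz]; exact hle
end

section
/- Let E = EuclideanSpace ℝ (Fin n), let w, f, u ∈ E with w ≠ 0 and ⟪w, f⟫ < 0, and define the linear map Ξ : E → E by Ξ(z) = z + (⟪w, z⟫/⟪w, f⟫) • u. Then the operator norm of Ξ (with respect to the Euclidean norm) satisfies ‖Ξ‖ ≤ 1 if and only if there exists α ∈ ℝ with u = α • w and 0 ≤ α ≤ −2⟪w, f⟫/‖w‖². -/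
set_option maxHeartbeats 1000000

/-- Proposition 4: in Euclidean space, the saltation matrix
`Ξ z = z + (⟪w, z⟫ / ⟪w, f⟫) • u` for a translation reset is nonexpansive
(operator norm at most 1) iff `u = α • w` with `0 ≤ α ≤ -2⟪w,f⟫/‖w‖²`. -/
theorem saltation_translation_euclidean_nonexpansive_iff
    {n : ℕ} (w f u : EuclideanSpace ℝ (Fin n))
    (hw : w ≠ 0) (hwf : (inner ℝ w f : ℝ) < 0)
    (Ξ : EuclideanSpace ℝ (Fin n) →L[ℝ] EuclideanSpace ℝ (Fin n))
    (hΞ : ∀ z, Ξ z = z + ((inner ℝ w z : ℝ) / (inner ℝ w f : ℝ)) • u) :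
    ‖Ξ‖ ≤ 1 ↔
      ∃ α : ℝ, u = α • w ∧ 0 ≤ α ∧ α ≤ -2 * (inner ℝ w f : ℝ) / ‖w‖ ^ 2 := by
  set s : ℝ := inner ℝ w f with hs_def
  clear_value s
  have hs : s < 0 := hwf
  have hsne : s ≠ 0 := ne_of_lt hs
  have hwn : (0:ℝ) < ‖w‖ := norm_pos_iff.mpr hw
  have hk : (0:ℝ) < ‖w‖^2 := by positivity
  have hnorm : ∀ z : EuclideanSpace ℝ (Fin n), ‖Ξ z‖^2 = ‖z‖^2 +
      (2*((inner ℝ w z:ℝ)/s)*(inner ℝ z u:ℝ) + ((inner ℝ w z:ℝ)/s)^2*‖u‖^2) := by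
    intro z
    rw [hΞ z, norm_add_sq_real, real_inner_smul_right, norm_smul, mul_pow, Real.norm_eq_abs, sq_abs]
    ring
  have key : ‖Ξ‖ ≤ 1 ↔ ∀ z : EuclideanSpace ℝ (Fin n),
      2*((inner ℝ w z : ℝ)/s)*(inner ℝ z u : ℝ) + ((inner ℝ w z : ℝ)/s)^2*‖u‖^2 ≤ 0 := by
    constructor
    · intro h1 z
      have h2 : ‖Ξ z‖ ≤ ‖z‖ := by
        calc ‖Ξ z‖ ≤ ‖Ξ‖ * ‖z‖ := Ξ.le_opNorm z
        _ ≤ 1 * ‖z‖ := mul_le_mul_of_nonneg_right h1 (norm_nonneg z)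
        _ = ‖z‖ := one_mul _
      have h3 : ‖Ξ z‖^2 ≤ ‖z‖^2 := by nlinarith [norm_nonneg (Ξ z)]
      have := hnorm z
      linarith
    · intro h
      refine Ξ.opNorm_le_bound zero_le_one (fun z => ?_)
      rw [one_mul]
      have h3 : ‖Ξ z‖^2 ≤ ‖z‖^2 := by rw [hnorm z]; linarith [h z]
      nlinarith [norm_nonneg (Ξ z), norm_nonneg z]
  rw [key]
  constructor
  · intro h
    set α : ℝ := (inner ℝ w u : ℝ) / ‖w‖^2 with hα_def
    clear_value α
    set v : EuclideanSpace ℝ (Fin n) := u - α • w with hv_def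
    have hwv : (inner ℝ w v : ℝ) = 0 := by
      simp only [hv_def, inner_sub_right, real_inner_smul_right,
        real_inner_self_eq_norm_sq, hα_def]
      field_simp
      ring
    have huv : u = α • w + v := by simp [hv_def]
    have hvw : (inner ℝ v w : ℝ) = 0 := by rw [real_inner_comm]; exact hwv
    have hvu : (inner ℝ v u : ℝ) = ‖v‖^2 := by
      rw [huv, inner_add_right, real_inner_smul_right, hvw, real_inner_self_eq_norm_sq]
      ring
    have hv : v = 0 := by
      by_contra hv0
      have hvn : (0:ℝ) < ‖v‖^2 := by
        have := norm_pos_iff.mpr hv0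
        positivity
      set A : ℝ := ‖w‖^2 / s with hA_def
      have hA : A < 0 := div_neg_of_pos_of_neg hk hs
      have hAne : A ≠ 0 := ne_of_lt hA
      set C : ℝ := (inner ℝ w u : ℝ) with hC_def
      set t : ℝ := (-(2*A*C) - A^2*‖u‖^2 + 1)/(2*A*‖v‖^2) with ht_def
      have hz := h (w + t • v)
      have e1 : (inner ℝ w (w + t • v) : ℝ) = ‖w‖^2 := by
        rw [inner_add_right, real_inner_smul_right, hwv, real_inner_self_eq_norm_sq]
        ring
      have e2 : (inner ℝ (w + t • v) u : ℝ) = C + t*‖v‖^2 := by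
        rw [inner_add_left, real_inner_smul_left, hvu, hC_def]
      rw [e1, e2] at hz
      have ht : 2*A*t*‖v‖^2 = -(2*A*C) - A^2*‖u‖^2 + 1 := by
        rw [ht_def]
        field_simp
      have hz' : 2*A*(C + t*‖v‖^2) + A^2*‖u‖^2 ≤ 0 := hz
      nlinarith [hz', ht]
    have hu : u = α • w := by rw [huv, hv, add_zero]
    refine ⟨α, hu, ?_⟩
    have hzw := h w
    rw [hu] at hzw
    have e3 : (inner ℝ w w : ℝ) = ‖w‖^2 := real_inner_self_eq_norm_sq w
    have e4 : (inner ℝ w (α • w) : ℝ) = α * ‖w‖^2 := by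
      rw [real_inner_smul_right, e3]
    have e5 : ‖α • w‖^2 = α^2 * ‖w‖^2 := by
      rw [norm_smul, mul_pow, Real.norm_eq_abs, sq_abs]
    rw [e3, e4, e5] at hzw
    have heq : 2*(‖w‖^2/s)*(α * ‖w‖^2) + (‖w‖^2/s)^2*(α^2*‖w‖^2)
        = (‖w‖^2)^2/s^2 * (α*(2*s+α*‖w‖^2)) := by
      field_simp
    rw [heq] at hzw
    have hc : (0:ℝ) < (‖w‖^2)^2/s^2 := by positivity
    have h4 : α*(2*s+α*‖w‖^2) ≤ 0 := by
      have h5 : (‖w‖^2)^2/s^2 * (α*(2*s+α*‖w‖^2)) ≤ (‖w‖^2)^2/s^2 * 0 := by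
        simpa using hzw
      exact le_of_mul_le_mul_left h5 hc
    clear h hnorm key hΞ hwv huv hvw hvu hv hzw heq
    clear_value v
    clear hv_def v
    have hα0 : 0 ≤ α := by
      by_contra hneg
      push_neg at hneg
      nlinarith [mul_pos (neg_pos.2 hneg) (neg_pos.2 hneg)]
    refine ⟨hα0, ?_⟩
    rw [le_div_iff₀ hk]
    rcases eq_or_lt_of_le hα0 with h0 | h0
    · nlinarith
    · nlinarith [mul_pos h0 h0]
  · rintro ⟨α, rfl, hα0, hα1⟩
    intro z
    set p : ℝ := inner ℝ w z with hp_def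
    have e4 : (inner ℝ z (α • w) : ℝ) = α * p := by
      rw [real_inner_smul_right, real_inner_comm]
    have e5 : ‖α • w‖^2 = α^2 * ‖w‖^2 := by
      rw [norm_smul, mul_pow, Real.norm_eq_abs, sq_abs]
    rw [e4, e5]
    have heq : 2*(p/s)*(α*p) + (p/s)^2*(α^2*‖w‖^2)
        = p^2/s^2 * (α*(2*s+α*‖w‖^2)) := by
      field_simp
    rw [heq]
    have h2s : 2*s + α*‖w‖^2 ≤ 0 := by
      rw [le_div_iff₀ hk] at hα1
      linarith
    have : α*(2*s+α*‖w‖^2) ≤ 0 := mul_nonpos_of_nonneg_of_nonpos hα0 h2s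
    have hp2 : (0:ℝ) ≤ p^2/s^2 := by positivity
    exact mul_nonpos_of_nonneg_of_nonpos hp2 this
end

section
/- Let c ∈ ℝ, K ≥ 0, let f : [0,∞) → [0,∞), and let (tᵢ)ᵢ∈ℕ be a strictly increasing sequence of nonnegative reals with t₀ = 0 and tᵢ → ∞. Suppose (i) for every i and all s, t with tᵢ ≤ s ≤ t < tᵢ₊₁ one has f(t) ≤ e^{c(t−s)} f(s), and (ii) for every i and every s with tᵢ ≤ s < tᵢ₊₁ one has f(tᵢ₊₁) ≤ K e^{c(tᵢ₊₁−s)} f(s). Then for every T ≥ 0, f(T) ≤ K^{N(T)} e^{cT} f(0), where N(T) is the (finite) number of indices i ≥ 1 with tᵢ ≤ T. -/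
/-- The recursion underlying Corollary 1: if `f` satisfies the flow estimate
within each inter-reset interval and the jump estimate with factor `K` at each
reset time, then `f T ≤ K^{N(T)} e^{cT} f 0`, where `N(T)` is the number of
reset times `τ i` (with `i ≥ 1`) in `[0, T]`. -/
theorem hybrid_recursion_with_jump_factor
    (c K : ℝ) (hK : 0 ≤ K) (f : ℝ → ℝ) (hf : ∀ t : ℝ, 0 ≤ t → 0 ≤ f t)
    (τ : ℕ → ℝ) (hmono : StrictMono τ) (hτ0 : τ 0 = 0)
    (hτtop : Filter.Tendsto τ Filter.atTop Filter.atTop)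
    (hflow : ∀ i : ℕ, ∀ s t : ℝ, τ i ≤ s → s ≤ t → t < τ (i + 1) →
      f t ≤ Real.exp (c * (t - s)) * f s)
    (hjump : ∀ i : ℕ, ∀ s : ℝ, τ i ≤ s → s < τ (i + 1) →
      f (τ (i + 1)) ≤ K * Real.exp (c * (τ (i + 1) - s)) * f s) :
    ∀ T : ℝ, 0 ≤ T →
      f T ≤ K ^ ({i : ℕ | 1 ≤ i ∧ τ i ≤ T}.ncard) * Real.exp (c * T) * f 0 := by
  have hτnonneg : ∀ n : ℕ, 0 ≤ τ n := by
    intro n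
    rw [← hτ0]
    exact hmono.monotone (Nat.zero_le n)
  -- key induction
  have key : ∀ n : ℕ, ∀ T : ℝ, τ n ≤ T → T < τ (n + 1) →
      f T ≤ K ^ n * Real.exp (c * T) * f 0 := by
    intro n
    induction n with
    | zero =>
      intro T h1 h2
      have := hflow 0 0 T (le_of_eq hτ0) (hτ0 ▸ h1) h2
      simpa using this
    | succ n ih =>
      intro T h1 h2
      have hτlt : τ n < τ (n + 1) := hmono (Nat.lt_succ_self n)
      have hjumpn := hjump n (τ n) le_rfl hτlt
      have hihn := ih (τ n) le_rfl hτlt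
      have hflowT := hflow (n + 1) (τ (n + 1)) T le_rfl h1 h2
      have hf0 : 0 ≤ f 0 := hf 0 le_rfl
      have hfτn1 : f (τ (n + 1)) ≤ K * Real.exp (c * (τ (n + 1) - τ n)) *
          (K ^ n * Real.exp (c * τ n) * f 0) := by
        refine hjumpn.trans ?_
        exact mul_le_mul_of_nonneg_left hihn
          (by positivity)
      calc f T ≤ Real.exp (c * (T - τ (n + 1))) * f (τ (n + 1)) := hflowT
        _ ≤ Real.exp (c * (T - τ (n + 1))) *
            (K * Real.exp (c * (τ (n + 1) - τ n)) *
              (K ^ n * Real.exp (c * τ n) * f 0)) :=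
          mul_le_mul_of_nonneg_left hfτn1 (Real.exp_pos _).le
        _ = K ^ (n + 1) * (Real.exp (c * (T - τ (n + 1))) *
            Real.exp (c * (τ (n + 1) - τ n)) * Real.exp (c * τ n)) * f 0 := by
          ring
        _ = K ^ (n + 1) * Real.exp (c * T) * f 0 := by
          rw [← Real.exp_add, ← Real.exp_add]
          ring_nf
  intro T hT
  -- find n with τ n ≤ T < τ (n+1)
  have hex : ∃ m : ℕ, T < τ m := by
    rcases (Filter.tendsto_atTop.mp hτtop (T + 1)).exists with ⟨m, hm⟩
    exact ⟨m, by linarith⟩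
  classical
  have hmlt : T < τ (Nat.find hex) := Nat.find_spec hex
  have hm0 : Nat.find hex ≠ 0 := by
    intro h
    rw [h, hτ0] at hmlt
    linarith
  obtain ⟨n, hn⟩ := Nat.exists_eq_succ_of_ne_zero hm0
  rw [hn] at hmlt
  have hτnT : τ n ≤ T := by
    by_contra h
    exact Nat.find_min hex (hn ▸ Nat.lt_succ_self n) (lt_of_not_ge h)
  have hset : {i : ℕ | 1 ≤ i ∧ τ i ≤ T} = Set.Icc 1 n := by
    ext i
    simp only [Set.mem_setOf_eq, Set.mem_Icc]
    constructor
    · rintro ⟨h1, h2⟩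
      refine ⟨h1, ?_⟩
      by_contra h
      have : τ (n + 1) ≤ τ i := hmono.monotone (Nat.succ_le_of_lt (lt_of_not_ge h))
      linarith
    · rintro ⟨h1, h2⟩
      exact ⟨h1, le_trans (hmono.monotone h2) hτnT⟩
  rw [hset]
  have hcard : (Set.Icc 1 n).ncard = n := by
    simp [← Finset.coe_Icc, Set.ncard_coe_finset]
  rw [hcard]
  exact key n T hτnT hmlt
end

section
/- Let c ∈ ℝ, K ≥ 0, 0 < τ̲ ≤ τ̄ < ∞, let f : [0,∞) → [0,∞), and let (tᵢ)ᵢ∈ℕ be a strictly increasing sequence of nonnegative reals with t₀ = 0 and τ̲ ≤ tᵢ₊₁ − tᵢ ≤ τ̄ for all i. Suppose (i) for every i and all s, t with tᵢ ≤ s ≤ t < tᵢ₊₁ one has f(t) ≤ e^{c(t−s)} f(s), and (ii) for every i and every s with tᵢ ≤ s < tᵢ₊₁ one has f(tᵢ₊₁) ≤ K e^{c(tᵢ₊₁−s)} f(s). Then for every T ≥ 0, f(T) ≤ max{K^{⌈T/τ̲⌉}, K^{⌊T/τ̄⌋}} · e^{cT} · f(0). -/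
/-- Quantitative bound of Corollary 1: with matrix-measure bound `c` within each
domain, saltation norm bound `K` at each reset, and dwell times between `τl`
and `τu`, one has `f T ≤ max{K^⌈T/τl⌉, K^⌊T/τu⌋} e^{cT} f 0`. -/
theorem hybrid_dwell_time_bound
    (c K : ℝ) (hK : 0 ≤ K) (τl τu : ℝ) (hτl : 0 < τl) (hlu : τl ≤ τu)
    (f : ℝ → ℝ) (hf : ∀ t : ℝ, 0 ≤ t → 0 ≤ f t)
    (τ : ℕ → ℝ) (hmono : StrictMono τ) (hτ0 : τ 0 = 0)
    (hdwell : ∀ i : ℕ, τl ≤ τ (i + 1) - τ i ∧ τ (i + 1) - τ i ≤ τu)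
    (hflow : ∀ i : ℕ, ∀ s t : ℝ, τ i ≤ s → s ≤ t → t < τ (i + 1) →
      f t ≤ Real.exp (c * (t - s)) * f s)
    (hjump : ∀ i : ℕ, ∀ s : ℝ, τ i ≤ s → s < τ (i + 1) →
      f (τ (i + 1)) ≤ K * Real.exp (c * (τ (i + 1) - s)) * f s) :
    ∀ T : ℝ, 0 ≤ T →
      f T ≤ max (K ^ ⌈T / τl⌉₊) (K ^ ⌊T / τu⌋₊) * Real.exp (c * T) * f 0 := by
  intro T hT
  have hf0 : 0 ≤ f 0 := hf 0 le_rfl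
  -- lower and upper bounds on τ n
  have hlow : ∀ n : ℕ, (n : ℝ) * τl ≤ τ n := by
    intro n
    induction n with
    | zero => simp [hτ0]
    | succ n ih =>
      have := (hdwell n).1
      push_cast
      linarith
  have hup : ∀ n : ℕ, τ n ≤ (n : ℝ) * τu := by
    intro n
    induction n with
    | zero => simp [hτ0]
    | succ n ih =>
      have := (hdwell n).2
      push_cast
      linarith
  -- bound at reset times
  have hreset : ∀ n : ℕ, f (τ n) ≤ K ^ n * Real.exp (c * τ n) * f 0 := by
    intro n
    induction n with
    | zero => simp [hτ0]
    | succ n ih =>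
      have hlt : τ n < τ (n + 1) := hmono (Nat.lt_succ_self n)
      have h1 := hjump n (τ n) le_rfl hlt
      have hexp : (0 : ℝ) < Real.exp (c * (τ (n + 1) - τ n)) := Real.exp_pos _
      calc f (τ (n + 1)) ≤ K * Real.exp (c * (τ (n + 1) - τ n)) * f (τ n) := h1
        _ ≤ K * Real.exp (c * (τ (n + 1) - τ n)) * (K ^ n * Real.exp (c * τ n) * f 0) := by
            apply mul_le_mul_of_nonneg_left ih (by positivity)
        _ = K ^ (n + 1) * Real.exp (c * τ (n + 1)) * f 0 := by
            rw [show c * τ (n + 1) = c * (τ (n + 1) - τ n) + c * τ n by ring, Real.exp_add]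
            ring
  -- find n with τ n ≤ T < τ (n+1)
  have hunbdd : ∃ m : ℕ, T < τ m := by
    obtain ⟨m, hm⟩ := exists_nat_gt (T / τl)
    refine ⟨m, lt_of_lt_of_le ?_ (hlow m)⟩
    calc T = T / τl * τl := by field_simp
      _ < (m : ℝ) * τl := by exact mul_lt_mul_of_pos_right hm hτl
  classical
  set m := Nat.find hunbdd with hmdef
  have hm : T < τ m := Nat.find_spec hunbdd
  have hm0 : m ≠ 0 := by
    rintro h
    rw [h, hτ0] at hm; linarith
  obtain ⟨n, hn⟩ := Nat.exists_eq_succ_of_ne_zero hm0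
  have hτnT : τ n ≤ T := by
    by_contra h
    have := Nat.find_le (h := hunbdd) (lt_of_not_ge h)
    omega
  rw [hn] at hm
  -- main bound with exponent n
  have hKn : f T ≤ K ^ n * Real.exp (c * T) * f 0 := by
    have h1 := hflow n (τ n) T le_rfl hτnT hm
    calc f T ≤ Real.exp (c * (T - τ n)) * f (τ n) := h1
      _ ≤ Real.exp (c * (T - τ n)) * (K ^ n * Real.exp (c * τ n) * f 0) := by
          apply mul_le_mul_of_nonneg_left (hreset n) (Real.exp_pos _).le
      _ = K ^ n * Real.exp (c * T) * f 0 := by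
          rw [show c * T = c * (T - τ n) + c * τ n by ring, Real.exp_add]
          ring
  -- compare K ^ n with the max
  have hnle : (n : ℝ) ≤ T / τl := by
    rw [le_div_iff₀ hτl]
    exact le_trans (hlow n) hτnT
  have hfloorle : ⌊T / τu⌋₊ ≤ n := by
    have hτu : (0 : ℝ) < τu := lt_of_lt_of_le hτl hlu
    have : T / τu < (n + 1 : ℕ) := by
      rw [div_lt_iff₀ hτu]
      push_cast
      have := hup (n + 1)
      push_cast at this ⊢
      linarith
    exact Nat.lt_succ_iff.mp (by exact_mod_cast (Nat.floor_lt (by positivity)).2 this)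
  have hKle : K ^ n ≤ max (K ^ ⌈T / τl⌉₊) (K ^ ⌊T / τu⌋₊) := by
    rcases le_total 1 K with hK1 | hK1
    · refine le_max_of_le_left (pow_le_pow_right₀ hK1 ?_)
      have : (n : ℝ) ≤ (⌈T / τl⌉₊ : ℝ) := hnle.trans (Nat.le_ceil _)
      exact_mod_cast this
    · exact le_max_of_le_right (pow_le_pow_of_le_one hK hK1 hfloorle)
  exact hKn.trans (mul_le_mul_of_nonneg_right
    (mul_le_mul_of_nonneg_right hKle (Real.exp_pos _).le) hf0)
end
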